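/- Under hypotheses (C1) and (C2), and assuming additionally that Z(s) := ∑_{b∈A} ρ(s,b)·μ(b|s) > 0 for every s ∈ S, define the policy π̃ by π̃(a|s) = ρ(s,a)·μ(a|s) / Z(s). Then the value function V^{π̃} is a fixed point of the V-trace operator R, i.e. R V^{π̃} = V^{π̃}, and it is the unique fixed point of R among functions S → ℝ^K. -/

import Mathlib

open Finset

/-- `exw μ P c h t s` is the trajectory expectation
`E_μ[(c(s_0,a_0)⋯c(s_{t-1},a_{t-1})) * h(s_t, a_t, s_{t+1}) | s_0 = s]` in a finite MDP
with behavioral policy `μ` and transition kernel `P`. -/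
noncomputable def exw {S A : Type*} [Fintype S] [Fintype A]
    (μ : S → A → ℝ) (P : S → A → S → ℝ) (c : S → A → ℝ)
    (h : S → A → S → ℝ) : ℕ → S → ℝ
  | 0, s => ∑ a, μ s a * ∑ s', P s a s' * h s a s'
  | (t + 1), s => ∑ a, μ s a * c s a * ∑ s', P s a s' * exw μ P c h t s'

/-- The V-trace operator `R` (componentwise, for `ℝ^K`-valued value functions):
`R V s k = V s k + ∑_{t=0}^∞ γ^t E_μ[(c_0⋯c_{t-1}) ρ_t (r_t + γ V(s_{t+1}) - V(s_t)) | s_0 = s]`. -/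
noncomputable def vtraceOp {S A : Type*} [Fintype S] [Fintype A] {K : ℕ}
    (γ : ℝ) (μ : S → A → ℝ) (P : S → A → S → ℝ) (c ρ : S → A → ℝ)
    (r : S → A → Fin K → ℝ) (V : S → Fin K → ℝ) : S → Fin K → ℝ :=
  fun s k => V s k + ∑' t : ℕ,
    γ ^ t * exw μ P c (fun s1 a s2 => ρ s1 a * (r s1 a k + γ * V s2 k - V s1 k)) t s

/-- The value function of a policy `π`:
`V^π(s) = ∑_{t=0}^∞ γ^t E_π[r(s_t, a_t) | s_0 = s]`, componentwise. -/
noncomputable def valueFn {S A : Type*} [Fintype S] [Fintype A] {K : ℕ}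
    (γ : ℝ) (π : S → A → ℝ) (P : S → A → S → ℝ)
    (r : S → A → Fin K → ℝ) : S → Fin K → ℝ :=
  fun s k => ∑' t : ℕ, γ ^ t * exw π P (fun _ _ => 1) (fun s1 a _ => r s1 a k) t s

/-- The sup norm `‖V‖_∞ = max_{s} max_{k} |V_k(s)|` on functions `S → ℝ^K`. -/
noncomputable def supNorm {S : Type*} [Fintype S] [Nonempty S] {K : ℕ} [NeZero K]
    (V : S → Fin K → ℝ) : ℝ :=
  Finset.univ.sup' Finset.univ_nonempty fun s =>
    Finset.univ.sup' Finset.univ_nonempty fun k : Fin K => |V s k|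


section Aux
variable {S A : Type*} [Fintype S] [Fintype A]
  (μ : S → A → ℝ) (P : S → A → S → ℝ) (c : S → A → ℝ)

lemma exw_mono (hμ0 : ∀ s a, 0 ≤ μ s a) (hP0 : ∀ s a s', 0 ≤ P s a s')
    (hc0 : ∀ s a, 0 ≤ c s a) {h1 h2 : S → A → S → ℝ}
    (hh : ∀ s a s', h1 s a s' ≤ h2 s a s') :
    ∀ t s, exw μ P c h1 t s ≤ exw μ P c h2 t s := by
  intro t
  induction t with
  | zero =>
    intro s
    refine Finset.sum_le_sum fun a _ => mul_le_mul_of_nonneg_left ?_ (hμ0 s a)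
    exact Finset.sum_le_sum fun s' _ => mul_le_mul_of_nonneg_left (hh s a s') (hP0 s a s')
  | succ t ih =>
    intro s
    refine Finset.sum_le_sum fun a _ => mul_le_mul_of_nonneg_left ?_
      (mul_nonneg (hμ0 s a) (hc0 s a))
    exact Finset.sum_le_sum fun s' _ => mul_le_mul_of_nonneg_left (ih s') (hP0 s a s')

lemma abs_exw_le (hμ0 : ∀ s a, 0 ≤ μ s a) (hP0 : ∀ s a s', 0 ≤ P s a s')
    (hc0 : ∀ s a, 0 ≤ c s a) (h : S → A → S → ℝ) :
    ∀ t s, |exw μ P c h t s| ≤ exw μ P c (fun s a s' => |h s a s'|) t s := by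
  intro t
  induction t with
  | zero =>
    intro s
    refine (Finset.abs_sum_le_sum_abs _ _).trans (Finset.sum_le_sum fun a _ => ?_)
    rw [abs_mul, abs_of_nonneg (hμ0 s a)]
    refine mul_le_mul_of_nonneg_left ?_ (hμ0 s a)
    refine (Finset.abs_sum_le_sum_abs _ _).trans (Finset.sum_le_sum fun s' _ => ?_)
    rw [abs_mul, abs_of_nonneg (hP0 s a s')]
  | succ t ih =>
    intro s
    refine (Finset.abs_sum_le_sum_abs _ _).trans (Finset.sum_le_sum fun a _ => ?_)
    rw [abs_mul, abs_of_nonneg (mul_nonneg (hμ0 s a) (hc0 s a))]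
    refine mul_le_mul_of_nonneg_left ?_ (mul_nonneg (hμ0 s a) (hc0 s a))
    refine (Finset.abs_sum_le_sum_abs _ _).trans (Finset.sum_le_sum fun s' _ => ?_)
    rw [abs_mul, abs_of_nonneg (hP0 s a s')]
    exact mul_le_mul_of_nonneg_left (ih s') (hP0 s a s')

lemma exw_add (h1 h2 : S → A → S → ℝ) :
    ∀ t s, exw μ P c (fun s a s' => h1 s a s' + h2 s a s') t s
      = exw μ P c h1 t s + exw μ P c h2 t s := by
  intro t
  induction t with
  | zero =>
    intro s
    simp only [exw, ← Finset.sum_add_distrib]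
    refine Finset.sum_congr rfl fun a _ => ?_
    rw [← mul_add, ← Finset.sum_add_distrib]
    congr 1
    exact Finset.sum_congr rfl fun s' _ => by ring
  | succ t ih =>
    intro s
    simp only [exw, ← Finset.sum_add_distrib]
    refine Finset.sum_congr rfl fun a _ => ?_
    rw [← mul_add, ← Finset.sum_add_distrib]
    congr 1
    exact Finset.sum_congr rfl fun s' _ => by rw [ih s']; ring

lemma exw_const_mul (b : ℝ) (h : S → A → S → ℝ) :
    ∀ t s, exw μ P c (fun s a s' => b * h s a s') t s = b * exw μ P c h t s := by
  intro t
  induction t with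
  | zero =>
    intro s
    simp only [exw, Finset.mul_sum]
    refine Finset.sum_congr rfl fun a _ => ?_
    exact Finset.sum_congr rfl fun i _ => by ring
  | succ t ih =>
    intro s
    simp only [exw, Finset.mul_sum]
    refine Finset.sum_congr rfl fun a _ => ?_
    exact Finset.sum_congr rfl fun i _ => by rw [ih i]; ring

lemma exw_eq_zero (h : S → A → S → ℝ)
    (hbase : ∀ s, exw μ P c h 0 s = 0) : ∀ t s, exw μ P c h t s = 0 := by
  intro t
  induction t with
  | zero => exact hbase
  | succ t ih =>
    intro s
    show ∑ a, _ = 0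
    refine Finset.sum_eq_zero fun a _ => ?_
    rw [Finset.sum_eq_zero fun s' _ => by rw [ih s', mul_zero], mul_zero]

-- bound on exw ρ under C1
lemma exw_rho_le (hμ0 : ∀ s a, 0 ≤ μ s a) (hμ1 : ∀ s, ∑ a, μ s a = 1)
    (hP0 : ∀ s a s', 0 ≤ P s a s') (hP1 : ∀ s a, ∑ s', P s a s' = 1)
    (hc0 : ∀ s a, 0 ≤ c s a) (ρ : S → A → ℝ) (hρ0 : ∀ s a, 0 ≤ ρ s a)
    (hC1 : ∀ s a s', 0 < P s a s' → 0 ≤ ρ s a - c s a * ∑ a', μ s' a' * ρ s' a') :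
    ∀ t s, exw μ P c (fun s a _ => ρ s a) t s ≤ ∑ a, μ s a * ρ s a := by
  intro t
  induction t with
  | zero =>
    intro s
    refine le_of_eq (Finset.sum_congr rfl fun a _ => ?_)
    rw [← Finset.sum_mul, hP1 s a, one_mul]
  | succ t ih =>
    intro s
    refine Finset.sum_le_sum fun a _ => ?_
    calc μ s a * c s a * ∑ s', P s a s' * exw μ P c (fun s a _ => ρ s a) t s'
        ≤ μ s a * c s a * ∑ s', P s a s' * ∑ a', μ s' a' * ρ s' a' := by
          refine mul_le_mul_of_nonneg_left ?_ (mul_nonneg (hμ0 s a) (hc0 s a))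
          exact Finset.sum_le_sum fun s' _ => mul_le_mul_of_nonneg_left (ih s') (hP0 s a s')
      _ = μ s a * ∑ s', P s a s' * (c s a * ∑ a', μ s' a' * ρ s' a') := by
          rw [mul_assoc, Finset.mul_sum]
          congr 1
          exact Finset.sum_congr rfl fun s' _ => by ring
      _ ≤ μ s a * ∑ s', P s a s' * ρ s a := by
          refine mul_le_mul_of_nonneg_left (Finset.sum_le_sum fun s' _ => ?_) (hμ0 s a)
          rcases lt_or_eq_of_le (hP0 s a s') with hp | hp
          · exact mul_le_mul_of_nonneg_left (by linarith [hC1 s a s' hp]) (hP0 s a s')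
          · rw [← hp]; simp
      _ = μ s a * ρ s a := by rw [← Finset.sum_mul, hP1 s a, one_mul]

lemma exw_bound (hμ0 : ∀ s a, 0 ≤ μ s a) (hμ1 : ∀ s, ∑ a, μ s a = 1)
    (hP0 : ∀ s a s', 0 ≤ P s a s') (hP1 : ∀ s a, ∑ s', P s a s' = 1)
    (hc0 : ∀ s a, 0 ≤ c s a) (hwc : ∀ s, ∑ a, μ s a * c s a ≤ 1)
    (h : S → A → S → ℝ) (C : ℝ) (hC : 0 ≤ C) (hh : ∀ s a s', |h s a s'| ≤ C) :
    ∀ t s, |exw μ P c h t s| ≤ C := by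
  intro t
  induction t with
  | zero =>
    intro s
    refine (Finset.abs_sum_le_sum_abs _ _).trans ?_
    calc ∑ a, |μ s a * ∑ s', P s a s' * h s a s'|
        ≤ ∑ a, μ s a * C := by
          refine Finset.sum_le_sum fun a _ => ?_
          rw [abs_mul, abs_of_nonneg (hμ0 s a)]
          refine mul_le_mul_of_nonneg_left ?_ (hμ0 s a)
          refine (Finset.abs_sum_le_sum_abs _ _).trans ?_
          calc ∑ s', |P s a s' * h s a s'| ≤ ∑ s', P s a s' * C := by
                refine Finset.sum_le_sum fun s' _ => ?_
                rw [abs_mul, abs_of_nonneg (hP0 s a s')]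
                exact mul_le_mul_of_nonneg_left (hh s a s') (hP0 s a s')
            _ = C := by rw [← Finset.sum_mul, hP1 s a, one_mul]
      _ = C := by rw [← Finset.sum_mul, hμ1 s, one_mul]
  | succ t ih =>
    intro s
    refine (Finset.abs_sum_le_sum_abs _ _).trans ?_
    calc ∑ a, |μ s a * c s a * ∑ s', P s a s' * exw μ P c h t s'|
        ≤ ∑ a, μ s a * c s a * C := by
          refine Finset.sum_le_sum fun a _ => ?_
          rw [abs_mul, abs_of_nonneg (mul_nonneg (hμ0 s a) (hc0 s a))]
          refine mul_le_mul_of_nonneg_left ?_ (mul_nonneg (hμ0 s a) (hc0 s a))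
          refine (Finset.abs_sum_le_sum_abs _ _).trans ?_
          calc ∑ s', |P s a s' * exw μ P c h t s'| ≤ ∑ s', P s a s' * C := by
                refine Finset.sum_le_sum fun s' _ => ?_
                rw [abs_mul, abs_of_nonneg (hP0 s a s')]
                exact mul_le_mul_of_nonneg_left (ih s') (hP0 s a s')
            _ = C := by rw [← Finset.sum_mul, hP1 s a, one_mul]
      _ ≤ 1 * C := by
          rw [← Finset.sum_mul]
          exact mul_le_mul_of_nonneg_right (hwc s) hC
      _ = C := one_mul C

lemma tsum_rec (γ : ℝ) (hγ0 : 0 ≤ γ) (hγ1 : γ < 1) (f : ℕ → S → ℝ) (w : S → A → ℝ)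
    (hrec : ∀ t s, f (t + 1) s = ∑ a, w s a * ∑ s', P s a s' * f t s')
    (C : ℝ) (hbd : ∀ t s, |f t s| ≤ C) (s : S) :
    ∑' t, γ ^ t * f t s
      = f 0 s + γ * ∑ a, w s a * ∑ s', P s a s' * ∑' t, γ ^ t * f t s' := by
  have hsum : ∀ s, Summable (fun t => γ ^ t * f t s) := by
    intro s
    refine Summable.of_norm_bounded
      ((summable_geometric_of_lt_one hγ0 hγ1).mul_left C) fun t => ?_
    have : |γ ^ t * f t s| ≤ C * γ ^ t := by
      rw [abs_mul, abs_pow, abs_of_nonneg hγ0, mul_comm]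
      exact mul_le_mul_of_nonneg_right (hbd t s) (pow_nonneg hγ0 t)
    simpa [abs_mul] using this
  rw [Summable.tsum_eq_zero_add (hsum s)]
  simp only [pow_zero, one_mul]
  congr 1
  calc ∑' t : ℕ, γ ^ (t + 1) * f (t + 1) s
      = ∑' t : ℕ, ∑ a, ∑ s', (γ * w s a) * (P s a s' * (γ ^ t * f t s')) := by
        refine tsum_congr fun t => ?_
        rw [hrec t s]
        simp only [Finset.mul_sum]
        exact Finset.sum_congr rfl fun a _ => Finset.sum_congr rfl fun s' _ => by ring
    _ = ∑ a, ∑ s', ∑' t : ℕ, (γ * w s a) * (P s a s' * (γ ^ t * f t s')) := by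
        rw [Summable.tsum_finsetSum fun a _ => summable_sum fun s' _ =>
          ((hsum s').mul_left (P s a s')).mul_left (γ * w s a)]
        exact Finset.sum_congr rfl fun a _ => Summable.tsum_finsetSum fun s' _ =>
          ((hsum s').mul_left (P s a s')).mul_left (γ * w s a)
    _ = γ * ∑ a, w s a * ∑ s', P s a s' * ∑' t, γ ^ t * f t s' := by
        simp only [tsum_mul_left, Finset.mul_sum]
        exact Finset.sum_congr rfl fun a _ => Finset.sum_congr rfl fun s' _ => by ring
end Aux


section Bell
variable {S A : Type*} [Fintype S] [Fintype A] {K : ℕ}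

lemma valueFn_bellman (γ : ℝ) (hγ0 : 0 ≤ γ) (hγ1 : γ < 1)
    (π : S → A → ℝ) (hπ0 : ∀ s a, 0 ≤ π s a) (hπ1 : ∀ s, ∑ a, π s a = 1)
    (P : S → A → S → ℝ) (hP0 : ∀ s a s', 0 ≤ P s a s') (hP1 : ∀ s a, ∑ s', P s a s' = 1)
    (r : S → A → Fin K → ℝ) (k : Fin K) (C : ℝ) (hC0 : 0 ≤ C)
    (hC : ∀ s a, |r s a k| ≤ C) (s : S) :
    valueFn γ π P r s k
      = ∑ a, π s a * (r s a k + γ * ∑ s', P s a s' * valueFn γ π P r s' k) := by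
  have hrec : ∀ t s, exw π P (fun _ _ => 1) (fun s1 a _ => r s1 a k) (t + 1) s
      = ∑ a, π s a * ∑ s', P s a s' * exw π P (fun _ _ => 1) (fun s1 a _ => r s1 a k) t s' := by
    intro t s
    simp only [exw, mul_one]
  have hbd := exw_bound π P (fun _ _ => 1) hπ0 hπ1 hP0 hP1 (fun _ _ => zero_le_one)
    (fun s => by simp [hπ1 s]) (fun s1 a _ => r s1 a k) C hC0 (fun s a _ => hC s a)
  have h0 : exw π P (fun _ _ => 1) (fun s1 a _ => r s1 a k) 0 s = ∑ a, π s a * r s a k := by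
    simp only [exw]
    refine Finset.sum_congr rfl fun a _ => ?_
    rw [← Finset.sum_mul, hP1 s a, one_mul]
  have := tsum_rec P γ hγ0 hγ1 _ π hrec C hbd s
  show ∑' t, γ ^ t * exw π P (fun _ _ => 1) (fun s1 a _ => r s1 a k) t s = _
  rw [this, h0]
  have : ∀ a, π s a * (r s a k + γ * ∑ s', P s a s' * valueFn γ π P r s' k)
      = π s a * r s a k + γ * (π s a * ∑ s', P s a s' * valueFn γ π P r s' k) := fun a => by ring
  simp only [this, Finset.sum_add_distrib, ← Finset.mul_sum]
  rfl

end Bell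

/-- under (C1) and (C2), and assuming `Z s = ∑ b, ρ s b * μ s b > 0` for
every `s`, the policy `π̃(a|s) = ρ(s,a) μ(a|s) / Z(s)` has a value function `V^{π̃}`
which is a fixed point of the V-trace operator `R`, and it is the unique fixed point of
`R` among functions `S → ℝ^K`. -/
theorem vtrace_operator_fixed_point
    {S A : Type*} [Fintype S] [Fintype A] [Nonempty S] [Nonempty A]
    {K : ℕ} [NeZero K]
    (γ : ℝ) (hγ0 : 0 ≤ γ) (hγ1 : γ < 1)
    (P : S → A → S → ℝ) (hP0 : ∀ s a s', 0 ≤ P s a s')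
    (hP1 : ∀ s a, ∑ s', P s a s' = 1)
    (μ : S → A → ℝ) (hμ0 : ∀ s a, 0 ≤ μ s a) (hμ1 : ∀ s, ∑ a, μ s a = 1)
    (r : S → A → Fin K → ℝ)
    (c ρ : S → A → ℝ) (hc0 : ∀ s a, 0 ≤ c s a) (hρ0 : ∀ s a, 0 ≤ ρ s a)
    (hC1 : ∀ s a s', 0 < P s a s' →
      0 ≤ ρ s a - c s a * ∑ a', μ s' a' * ρ s' a')
    (β : ℝ) (hβ0 : 0 < β) (hβ1 : β ≤ 1)
    (hC2 : ∀ s, β ≤ ∑ a, μ s a * ρ s a)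
    (hZ : ∀ s, 0 < ∑ b, ρ s b * μ s b) :
    vtraceOp γ μ P c ρ r
        (valueFn γ (fun s a => ρ s a * μ s a / ∑ b, ρ s b * μ s b) P r)
      = valueFn γ (fun s a => ρ s a * μ s a / ∑ b, ρ s b * μ s b) P r ∧
    ∀ V : S → Fin K → ℝ, vtraceOp γ μ P c ρ r V = V →
      V = valueFn γ (fun s a => ρ s a * μ s a / ∑ b, ρ s b * μ s b) P r := by
  classical
  haveI : Nonempty (Fin K) := ⟨⟨0, Nat.pos_of_ne_zero (NeZero.ne K)⟩⟩
  set πt : S → A → ℝ := fun s a => ρ s a * μ s a / ∑ b, ρ s b * μ s b with hπt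
  set Vs : S → Fin K → ℝ := valueFn γ πt P r with hVs
  have hπ0 : ∀ s a, 0 ≤ πt s a := fun s a =>
    div_nonneg (mul_nonneg (hρ0 s a) (hμ0 s a)) (hZ s).le
  have hπ1 : ∀ s, ∑ a, πt s a = 1 := by
    intro s
    simp only [hπt]
    rw [← Finset.sum_div]
    exact div_self (hZ s).ne'
  have hrC : ∀ k : Fin K, ∃ C, 0 ≤ C ∧ ∀ s a, |r s a k| ≤ C := by
    intro k
    haveI : Nonempty (S × A) := instNonemptyProd
    refine ⟨(univ : Finset (S × A)).sup' univ_nonempty (fun p => |r p.1 p.2 k|), ?_, ?_⟩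
    · exact (abs_nonneg _).trans (Finset.le_sup' (fun p : S × A => |r p.1 p.2 k|)
        (mem_univ (Classical.arbitrary (S × A))))
    · intro s a
      exact Finset.le_sup' (fun p : S × A => |r p.1 p.2 k|) (mem_univ (s, a))
  have hBell : ∀ (k : Fin K) (s : S),
      Vs s k = ∑ a, πt s a * (r s a k + γ * ∑ s', P s a s' * Vs s' k) := by
    intro k s
    obtain ⟨C, hC0, hCk⟩ := hrC k
    exact valueFn_bellman γ hγ0 hγ1 πt hπ0 hπ1 P hP0 hP1 r k C hC0 hCk s
  have key : ∀ (k : Fin K) (W : S → ℝ),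
      (∀ s, W s = ∑ a, πt s a * (r s a k + γ * ∑ s', P s a s' * W s')) →
      ∀ s, ∑ a, μ s a * ∑ s', P s a s' * (ρ s a * (r s a k + γ * W s' - W s)) = 0 := by
    intro k W hW s
    have e1 : ∀ a, ∑ s', P s a s' * (ρ s a * (r s a k + γ * W s' - W s))
        = ρ s a * (r s a k + γ * (∑ s', P s a s' * W s') - W s) := by
      intro a
      have h1 : ∑ s', P s a s' * (ρ s a * (r s a k + γ * W s' - W s))
          = ∑ s', (P s a s' * (ρ s a * (r s a k - W s)) + (ρ s a * γ) * (P s a s' * W s')) :=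
        Finset.sum_congr rfl fun s' _ => by ring
      rw [h1, Finset.sum_add_distrib, ← Finset.sum_mul, ← Finset.mul_sum, hP1 s a, one_mul]
      ring
    have e2 : ∑ a, ρ s a * μ s a * (r s a k + γ * ∑ s', P s a s' * W s')
        = (∑ b, ρ s b * μ s b) * W s := by
      conv_rhs => rw [hW s]
      rw [Finset.mul_sum]
      refine Finset.sum_congr rfl fun a _ => ?_
      have hz := (hZ s).ne'
      simp only [hπt]
      field_simp
    calc ∑ a, μ s a * ∑ s', P s a s' * (ρ s a * (r s a k + γ * W s' - W s))
        = ∑ a, (ρ s a * μ s a * (r s a k + γ * ∑ s', P s a s' * W s')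
            - ρ s a * μ s a * W s) := by
          refine Finset.sum_congr rfl fun a _ => ?_
          rw [e1 a]; ring
      _ = (∑ a, ρ s a * μ s a * (r s a k + γ * ∑ s', P s a s' * W s'))
            - (∑ a, ρ s a * μ s a) * W s := by
          rw [Finset.sum_sub_distrib, Finset.sum_mul]
      _ = 0 := by rw [e2]; ring
  have hstar : ∀ (k : Fin K) (t : ℕ) (s : S),
      exw μ P c (fun s1 a s2 => ρ s1 a * (r s1 a k + γ * Vs s2 k - Vs s1 k)) t s = 0 := by
    intro k
    refine exw_eq_zero μ P c _ fun s => ?_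
    have h0 : exw μ P c (fun s1 a s2 => ρ s1 a * (r s1 a k + γ * Vs s2 k - Vs s1 k)) 0 s
        = ∑ a, μ s a * ∑ s', P s a s' * (ρ s a * (r s a k + γ * Vs s' k - Vs s k)) := rfl
    rw [h0]
    exact key k (fun s => Vs s k) (fun s => hBell k s) s
  have fixed : vtraceOp γ μ P c ρ r Vs = Vs := by
    funext s k
    show Vs s k + ∑' t, γ ^ t
        * exw μ P c (fun s1 a s2 => ρ s1 a * (r s1 a k + γ * Vs s2 k - Vs s1 k)) t s = Vs s k
    rw [tsum_congr fun t => by rw [hstar k t s, mul_zero], tsum_zero, add_zero]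
  refine ⟨fixed, ?_⟩
  intro V hV
  have hall : ∀ (k : Fin K) (s : S), V s k = Vs s k := by
    intro k
    set Δ : S → ℝ := fun s => V s k - Vs s k with hΔdef
    have hfe : (fun s1 a s2 => ρ s1 a * (r s1 a k + γ * V s2 k - V s1 k))
        = (fun s1 a s2 => ρ s1 a * (r s1 a k + γ * Vs s2 k - Vs s1 k)
            + ρ s1 a * (γ * Δ s2 - Δ s1)) := by
      funext s1 a s2
      simp only [hΔdef]
      ring
    have hdec : ∀ t s,
        exw μ P c (fun s1 a s2 => ρ s1 a * (r s1 a k + γ * V s2 k - V s1 k)) t s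
          = exw μ P c (fun s1 a s2 => ρ s1 a * (γ * Δ s2 - Δ s1)) t s := by
      intro t s
      rw [hfe, exw_add μ P c _ _ t s, hstar k t s, zero_add]
    have hVzero : ∀ s,
        ∑' t, γ ^ t * exw μ P c (fun s1 a s2 => ρ s1 a * (γ * Δ s2 - Δ s1)) t s = 0 := by
      intro s
      have h1 : V s k + ∑' t, γ ^ t
          * exw μ P c (fun s1 a s2 => ρ s1 a * (r s1 a k + γ * V s2 k - V s1 k)) t s
          = V s k := congrFun (congrFun hV s) k
      have h2 : ∑' t, γ ^ t
          * exw μ P c (fun s1 a s2 => ρ s1 a * (r s1 a k + γ * V s2 k - V s1 k)) t s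
          = 0 := by linarith
      rw [← h2]
      exact tsum_congr fun t => by rw [hdec t s]
    -- maximizer
    obtain ⟨s0, -, hs0⟩ := Finset.exists_mem_eq_sup' (univ_nonempty (α := S)) fun s => |Δ s|
    have hM : ∀ s, |Δ s| ≤ |Δ s0| := fun s =>
      (Finset.le_sup' (fun s => |Δ s|) (mem_univ s)).trans_eq hs0
    have hM0 : (0:ℝ) ≤ |Δ s0| := abs_nonneg _
    -- bound on the error expectations
    have habs : ∀ s a s', |ρ s a * (γ * Δ s' - Δ s)| ≤ (1 + γ) * |Δ s0| * ρ s a := by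
      intro s a s'
      rw [abs_mul, abs_of_nonneg (hρ0 s a), mul_comm ((1 + γ) * |Δ s0|)]
      refine mul_le_mul_of_nonneg_left ?_ (hρ0 s a)
      calc |γ * Δ s' - Δ s| ≤ |γ * Δ s'| + |Δ s| := by
            rw [sub_eq_add_neg]
            exact (abs_add_le _ _).trans (by rw [abs_neg])
        _ ≤ γ * |Δ s0| + |Δ s0| := add_le_add
            (by rw [abs_mul, abs_of_nonneg hγ0]
                exact mul_le_mul_of_nonneg_left (hM s') hγ0) (hM s)
        _ = (1 + γ) * |Δ s0| := by ring
    have hZb : ∀ s, ∑ a, μ s a * ρ s a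
        ≤ (univ : Finset S).sup' univ_nonempty (fun s => ∑ a, μ s a * ρ s a) := fun s =>
      Finset.le_sup' (fun s => ∑ a, μ s a * ρ s a) (mem_univ s)
    have hbd : ∀ t s, |exw μ P c (fun s1 a s2 => ρ s1 a * (γ * Δ s2 - Δ s1)) t s|
        ≤ (1 + γ) * |Δ s0|
          * (univ : Finset S).sup' univ_nonempty (fun s => ∑ a, μ s a * ρ s a) := by
      intro t s
      calc |exw μ P c (fun s1 a s2 => ρ s1 a * (γ * Δ s2 - Δ s1)) t s|
          ≤ exw μ P c (fun s1 a s2 => |ρ s1 a * (γ * Δ s2 - Δ s1)|) t s :=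
            abs_exw_le μ P c hμ0 hP0 hc0 _ t s
        _ ≤ exw μ P c (fun s1 a _ => (1 + γ) * |Δ s0| * ρ s1 a) t s :=
            exw_mono μ P c hμ0 hP0 hc0 (fun s a s' => habs s a s') t s
        _ = (1 + γ) * |Δ s0| * exw μ P c (fun s1 a _ => ρ s1 a) t s :=
            exw_const_mul μ P c _ _ t s
        _ ≤ (1 + γ) * |Δ s0|
              * (univ : Finset S).sup' univ_nonempty (fun s => ∑ a, μ s a * ρ s a) := by
            refine mul_le_mul_of_nonneg_left ?_ (mul_nonneg (by linarith) hM0)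
            exact (exw_rho_le μ P c hμ0 hμ1 hP0 hP1 hc0 ρ hρ0 hC1 t s).trans (hZb s)
    have hrec : ∀ t s,
        exw μ P c (fun s1 a s2 => ρ s1 a * (γ * Δ s2 - Δ s1)) (t + 1) s
          = ∑ a, (μ s a * c s a)
              * ∑ s', P s a s' * exw μ P c (fun s1 a s2 => ρ s1 a * (γ * Δ s2 - Δ s1)) t s' :=
      fun t s => rfl
    have he0 : ∀ s, exw μ P c (fun s1 a s2 => ρ s1 a * (γ * Δ s2 - Δ s1)) 0 s = 0 := by
      intro s
      have h4 := tsum_rec P γ hγ0 hγ1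
        (fun t s => exw μ P c (fun s1 a s2 => ρ s1 a * (γ * Δ s2 - Δ s1)) t s)
        (fun s a => μ s a * c s a) hrec _ hbd s
      rw [hVzero s] at h4
      simp only [hVzero, mul_zero, Finset.sum_const_zero, add_zero] at h4
      exact h4.symm
    have hlin : ∀ s, (∑ a, μ s a * ρ s a) * Δ s
        = γ * ∑ a, (μ s a * ρ s a) * ∑ s', P s a s' * Δ s' := by
      intro s
      have h5 : ∑ a, μ s a * ∑ s', P s a s' * (ρ s a * (γ * Δ s' - Δ s)) = 0 := he0 s
      have e1 : ∀ a, ∑ s', P s a s' * (ρ s a * (γ * Δ s' - Δ s))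
          = ρ s a * γ * (∑ s', P s a s' * Δ s') - ρ s a * Δ s := by
        intro a
        have h6 : ∑ s', P s a s' * (ρ s a * (γ * Δ s' - Δ s))
            = ∑ s', ((ρ s a * γ) * (P s a s' * Δ s') - P s a s' * (ρ s a * Δ s)) :=
          Finset.sum_congr rfl fun s' _ => by ring
        rw [h6, Finset.sum_sub_distrib, ← Finset.mul_sum, ← Finset.sum_mul, hP1 s a, one_mul]
      have h8 : ∑ a, (γ * ((μ s a * ρ s a) * ∑ s', P s a s' * Δ s')
          - (μ s a * ρ s a) * Δ s) = 0 := by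
        rw [← h5]
        refine Finset.sum_congr rfl fun a _ => ?_
        rw [e1 a]; ring
      rw [Finset.sum_sub_distrib, ← Finset.mul_sum, ← Finset.sum_mul] at h8
      linarith
    have hZs0 : (0:ℝ) < ∑ a, μ s0 a * ρ s0 a := lt_of_lt_of_le hβ0 (hC2 s0)
    have hbound : (∑ a, μ s0 a * ρ s0 a) * |Δ s0|
        ≤ γ * ((∑ a, μ s0 a * ρ s0 a) * |Δ s0|) := by
      have hmr0 : ∀ a, 0 ≤ μ s0 a * ρ s0 a := fun a => mul_nonneg (hμ0 s0 a) (hρ0 s0 a)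
      calc (∑ a, μ s0 a * ρ s0 a) * |Δ s0| = |(∑ a, μ s0 a * ρ s0 a) * Δ s0| := by
            rw [abs_mul, abs_of_nonneg (Finset.sum_nonneg fun a _ => hmr0 a)]
        _ = |γ * ∑ a, (μ s0 a * ρ s0 a) * ∑ s', P s0 a s' * Δ s'| := by rw [hlin s0]
        _ ≤ γ * ∑ a, (μ s0 a * ρ s0 a) * |Δ s0| := by
            rw [abs_mul, abs_of_nonneg hγ0]
            refine mul_le_mul_of_nonneg_left ?_ hγ0
            refine (Finset.abs_sum_le_sum_abs _ _).trans (Finset.sum_le_sum fun a _ => ?_)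
            rw [abs_mul, abs_of_nonneg (hmr0 a)]
            refine mul_le_mul_of_nonneg_left ?_ (hmr0 a)
            refine (Finset.abs_sum_le_sum_abs _ _).trans ?_
            calc ∑ s', |P s0 a s' * Δ s'| ≤ ∑ s', P s0 a s' * |Δ s0| := by
                  refine Finset.sum_le_sum fun s' _ => ?_
                  rw [abs_mul, abs_of_nonneg (hP0 s0 a s')]
                  exact mul_le_mul_of_nonneg_left (hM s') (hP0 s0 a s')
              _ = |Δ s0| := by rw [← Finset.sum_mul, hP1 s0 a, one_mul]
        _ = γ * ((∑ a, μ s0 a * ρ s0 a) * |Δ s0|) := by rw [← Finset.sum_mul]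
    have hMzero : |Δ s0| = 0 := by
      have hX : (∑ a, μ s0 a * ρ s0 a) * |Δ s0| ≤ 0 := by nlinarith
      have hprod : (∑ a, μ s0 a * ρ s0 a) * |Δ s0| = 0 :=
        le_antisymm hX (mul_nonneg hZs0.le hM0)
      rcases mul_eq_zero.mp hprod with h | h
      · exact absurd h hZs0.ne'
      · exact h
    intro s
    have : |Δ s| ≤ 0 := (hM s).trans_eq hMzero
    have hds : Δ s = 0 := abs_eq_zero.mp (le_antisymm this (abs_nonneg _))
    have : V s k - Vs s k = 0 := hds
    linarith
  funext s k
  exact hall k s
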